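/- Let R̂(η, β) = η·log₂(1 + C(1−β)) + (1−η)·log₂(1 + D₁√((ηβ+D₂)(ηβ+D₃))) with C, D₁, D₂, D₃ > 0 and D₁√(D₂D₃) = C. If 1/D₂ + 1/D₃ ≤ 2, then R̂(η, β) ≤ R̂(0, β) for all η ∈ [0,1] and β ∈ [0,1]; that is, sup over (η,β) ∈ [0,1]² of R̂ is attained at η = 0. -/
import Mathlib


/-- The closed-form approximate average achievable rate `R̂(η, β)` of problem (P2). -/
noncomputable def Rhat (C D1 D2 D3 η β : ℝ) : ℝ :=
  η * Real.logb 2 (1 + C * (1 - β)) +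
    (1 - η) * Real.logb 2 (1 + D1 * Real.sqrt ((η * β + D2) * (η * β + D3)))

theorem stmt_17 (C D1 D2 D3 : ℝ) (hC : 0 < C) (h1 : 0 < D1) (h2 : 0 < D2)
    (h3 : 0 < D3) (hrel : D1 * Real.sqrt (D2 * D3) = C)
    (hcond : 1 / D2 + 1 / D3 ≤ 2) :
    ∀ η ∈ Set.Icc (0 : ℝ) 1, ∀ β ∈ Set.Icc (0 : ℝ) 1,
      Rhat C D1 D2 D3 η β ≤ Rhat C D1 D2 D3 0 β := by
  intro η hη β hβ
  obtain ⟨hη0, hη1⟩ := hη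
  obtain ⟨hβ0, hβ1⟩ := hβ
  have hD : D2 + D3 ≤ 2 * (D2 * D3) := by
    have h2' := h2.ne'
    have h3' := h3.ne'
    rw [div_add_div _ _ h2' h3', div_le_iff₀ (mul_pos h2 h3)] at hcond
    linarith
  have hp1 : 1 ≤ D2 * D3 := by nlinarith [sq_nonneg (D2 - D3), mul_pos h2 h3]
  set x : ℝ := η * β with hxdef
  have hx0 : 0 ≤ x := mul_nonneg hη0 hβ0
  have ht0 : 0 ≤ 1 - η := by linarith
  have ht1 : 1 - η ≤ 1 := by linarith
  have hPnn : 0 ≤ (x + D2) * (x + D3) := by positivity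
  -- key polynomial inequality
  have hpoly : (1 - η) ^ 2 * ((x + D2) * (x + D3)) ≤ (D2 * D3) * ((1 - η) + x) ^ 2 := by
    have ha : 0 ≤ x ^ 2 * (D2 * D3 - (1 - η) ^ 2) :=
      mul_nonneg (sq_nonneg x) (by nlinarith)
    have hb : 0 ≤ x * ((1 - η) * (2 * (D2 * D3) - (1 - η) * (D2 + D3))) :=
      mul_nonneg hx0 (mul_nonneg ht0 (by nlinarith [add_pos h2 h3]))
    nlinarith [ha, hb]
  have hkey : (1 - η) * Real.sqrt ((x + D2) * (x + D3)) ≤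
      Real.sqrt (D2 * D3) * ((1 - η) + x) := by
    have hL : (1 - η) * Real.sqrt ((x + D2) * (x + D3)) =
        Real.sqrt ((1 - η) ^ 2 * ((x + D2) * (x + D3))) := by
      rw [Real.sqrt_mul (sq_nonneg _), Real.sqrt_sq ht0]
    have hR : Real.sqrt (D2 * D3) * ((1 - η) + x) =
        Real.sqrt ((D2 * D3) * ((1 - η) + x) ^ 2) := by
      rw [Real.sqrt_mul (mul_pos h2 h3).le, Real.sqrt_sq (by linarith)]
    rw [hL, hR]
    exact Real.sqrt_le_sqrt hpoly
  set A : ℝ := 1 + C * (1 - β) with hAdef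
  set B : ℝ := 1 + D1 * Real.sqrt ((x + D2) * (x + D3)) with hBdef
  have hA1 : 1 ≤ A := by nlinarith
  have hB1 : 1 ≤ B := le_add_of_nonneg_right (mul_nonneg h1.le (Real.sqrt_nonneg _))
  have hA0 : 0 < A := by linarith
  have hB0 : 0 < B := by linarith
  -- arithmetic bound
  have harith : η * A + (1 - η) * B ≤ 1 + C := by
    have h' : (1 - η) * (D1 * Real.sqrt ((x + D2) * (x + D3))) ≤ C * ((1 - η) + x) := by
      calc (1 - η) * (D1 * Real.sqrt ((x + D2) * (x + D3)))
          = D1 * ((1 - η) * Real.sqrt ((x + D2) * (x + D3))) := by ring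
        _ ≤ D1 * (Real.sqrt (D2 * D3) * ((1 - η) + x)) :=
            mul_le_mul_of_nonneg_left hkey h1.le
        _ = C * ((1 - η) + x) := by rw [← hrel]; ring
    have : η * A + (1 - η) * B =
        1 + η * (C * (1 - β)) + (1 - η) * (D1 * Real.sqrt ((x + D2) * (x + D3))) := by
      rw [hAdef, hBdef]; ring
    rw [this]
    have : η * (C * (1 - β)) = C * η - C * x := by rw [hxdef]; ring
    nlinarith [h']
  -- geometric mean
  have hgm : A ^ η * B ^ (1 - η) ≤ η * A + (1 - η) * B :=
    Real.geom_mean_le_arith_mean2_weighted hη0 ht0 hA0.le hB0.le (by ring)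
  have hlog : η * Real.logb 2 A + (1 - η) * Real.logb 2 B ≤ Real.logb 2 (1 + C) := by
    have h1' : Real.logb 2 (A ^ η * B ^ (1 - η)) ≤ Real.logb 2 (1 + C) :=
      Real.logb_le_logb_of_le one_lt_two (by positivity) (le_trans hgm harith)
    rwa [Real.logb_mul (by positivity) (by positivity),
      Real.logb_rpow_eq_mul_logb_of_pos hA0, Real.logb_rpow_eq_mul_logb_of_pos hB0] at h1'
  have hrhs : Rhat C D1 D2 D3 0 β = Real.logb 2 (1 + C) := by
    simp only [Rhat, zero_mul, zero_add, sub_zero, one_mul, hrel]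
  rw [hrhs]
  simpa only [Rhat, ← hxdef, ← hAdef, ← hBdef] using hlog
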